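/- arXiv:1708.03227 — 4 statements merged into one kernel-verified Lean document; each statement's English description precedes it below -/
import Mathlib

section
/- For every i ≥ 0 and every real s ≠ 0, the function τ_i agrees with the power series (-1)^i · Σ_{k=0}^∞ s^{2k} / ((2k)! · (2k+1)(2k+3)···(2k+2i-1)), which converges on all of ℝ; in particular τ_i extends to an even analytic function on ℝ with τ_i(0) = (-1)^i / (1·3·5···(2i-1)). -/
/-- τ₀(s) = cosh s, τ_{i+1}(s) = -(1/s)·τ_i'(s). -/
noncomputable def tau : ℕ → ℝ → ℝ
  | 0 => fun s => Real.cosh s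
  | (i+1) => fun s => -(1/s) * deriv (tau i) s

/-- The power series (-1)^i · Σ_k s^{2k} / ((2k)!·(2k+1)(2k+3)···(2k+2i-1)). -/
noncomputable def tauSeries (i : ℕ) (s : ℝ) : ℝ :=
  (-1 : ℝ) ^ i *
    ∑' k : ℕ, s ^ (2 * k) /
      (((2 * k).factorial * ∏ j ∈ Finset.range i, (2 * k + 2 * j + 1) : ℕ) : ℝ)

/-!
Put `d i k = (2k)! (2k+1)(2k+3)⋯(2k+2i-1)`. The series defining `tauSeries i s` is
`(-1)^i g_i(s²)` with `g_i(x) = ∑ x^k / d i k`. Since `d i k ≥ k!`, `g_i` is dominated by the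
exponential series, so it is entire and can be differentiated termwise; the identity
`d i (k+1) = 2(k+1) d (i+1) k` then gives `2 g_i' = g_{i+1}`, which says exactly that
`-(1/s) d/ds` maps the `i`-th series to the `(i+1)`-st. As `τ₀ = cosh` is the `0`-th series,
induction on `i` identifies `τ_i` with the series away from `0`.
-/

open Finset

noncomputable def powDivSum (d : ℕ → ℕ) (x : ℝ) : ℝ := ∑' k, x ^ k / d k

section FactorialDenominators

variable {d : ℕ → ℕ}

lemma norm_pow_div_le_of_factorial_le (hd : ∀ k, k.factorial ≤ d k) {x R : ℝ} (hx : |x| ≤ R)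
    (k : ℕ) : ‖x ^ k / d k‖ ≤ R ^ k / k.factorial := by
  have hR : 0 ≤ R := (abs_nonneg x).trans hx
  rw [norm_div, norm_pow, Real.norm_eq_abs, Real.norm_natCast]
  exact div_le_div₀ (by positivity) (pow_le_pow_left₀ (abs_nonneg x) hx k)
    (by positivity) (by exact_mod_cast hd k)

lemma summable_pow_div_of_factorial_le (hd : ∀ k, k.factorial ≤ d k) (x : ℝ) :
    Summable fun k => x ^ k / d k :=
  .of_norm_bounded (Real.summable_pow_div_factorial |x|)
    (norm_pow_div_le_of_factorial_le hd le_rfl)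

lemma norm_succ_mul_pow_div_le_of_factorial_le (hd : ∀ k, k.factorial ≤ d k) {x R : ℝ}
    (hx : |x| ≤ R) (k : ℕ) : ‖(k + 1) * x ^ k / d (k + 1)‖ ≤ R ^ k / k.factorial := by
  have hR : 0 ≤ R := (abs_nonneg x).trans hx
  have hd' : ((k + 1) * k.factorial : ℝ) ≤ d (k + 1) := by
    exact_mod_cast (Nat.factorial_succ k).symm.trans_le (hd (k + 1))
  rw [norm_div, norm_mul, norm_pow, Real.norm_eq_abs, Real.norm_natCast,
    abs_of_nonneg (by positivity : (0 : ℝ) ≤ k + 1)]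
  calc (k + 1) * |x| ^ k / d (k + 1) ≤ (k + 1) * R ^ k / ((k + 1) * k.factorial) := by gcongr
    _ = R ^ k / k.factorial := by field_simp

lemma hasDerivAt_powDivSum (hd : ∀ k, k.factorial ≤ d k) (x : ℝ) :
    HasDerivAt (powDivSum d) (∑' k, (k + 1) * x ^ k / d (k + 1)) x := by
  set R := |x| + 1
  -- splitting off the constant term avoids the truncated exponent `k - 1` in the derivatives
  have hsplit :
      powDivSum d = fun y : ℝ => ∑' k, y ^ (k + 1) / (d (k + 1) : ℝ) + 1 / (d 0 : ℝ) := by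
    ext y
    rw [powDivSum, (summable_pow_div_of_factorial_le hd y).tsum_eq_zero_add, add_comm, pow_zero]
  have hball : ∀ y ∈ Metric.ball (0 : ℝ) R, |y| ≤ R := fun y hy =>
    (mem_ball_zero_iff.mp hy).le
  rw [hsplit]
  refine (hasDerivAt_tsum_of_isPreconnected (Real.summable_pow_div_factorial R)
    Metric.isOpen_ball (convex_ball 0 R).isPreconnected
    (fun k y _ => ?_) (fun k y hy => norm_succ_mul_pow_div_le_of_factorial_le hd (hball y hy) k)
    (Metric.mem_ball_self (by positivity)) ?_ ?_).add_const _
  · simpa using (hasDerivAt_pow (k + 1) y).div_const (d (k + 1) : ℝ)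
  · exact (summable_nat_add_iff 1).mpr (summable_pow_div_of_factorial_le hd 0)
  · simp [R]

lemma analyticAt_powDivSum (hd : ∀ k, k.factorial ≤ d k) (x : ℝ) :
    AnalyticAt ℝ (powDivSum d) x := by
  set p := FormalMultilinearSeries.ofScalars ℝ fun k => (d k : ℝ)⁻¹
  have hradius : p.radius = ⊤ := by
    refine ENNReal.eq_top_of_forall_nnreal_le fun r => p.le_radius_of_summable_norm ?_
    simpa [p, FormalMultilinearSeries.ofScalars_norm, inv_mul_eq_div] using
      summable_pow_div_of_factorial_le hd r
  have hp : HasFPowerSeriesOnBall (powDivSum d) p 0 ⊤ := by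
    convert p.hasFPowerSeriesOnBall (by simp [hradius]) using 1
    · ext y
      change _ = FormalMultilinearSeries.ofScalarsSum _ y
      simp [powDivSum, FormalMultilinearSeries.ofScalars_sum_eq, div_eq_inv_mul]
    · exact hradius.symm
  exact hp.analyticAt_of_mem (by simp)

end FactorialDenominators

def tauDenom (i k : ℕ) : ℕ := (2 * k).factorial * ∏ j ∈ range i, (2 * k + 2 * j + 1)

lemma factorial_le_tauDenom (i k : ℕ) : k.factorial ≤ tauDenom i k :=
  (Nat.factorial_le (by omega)).trans
    (Nat.le_mul_of_pos_right _ (prod_pos fun j _ => by omega))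

lemma tauDenom_succ (i k : ℕ) : tauDenom i (k + 1) = 2 * (k + 1) * tauDenom (i + 1) k := by
  have hfact : (2 * (k + 1)).factorial = (2 * k + 2) * ((2 * k + 1) * (2 * k).factorial) := by
    rw [show 2 * (k + 1) = 2 * k + 1 + 1 by ring, Nat.factorial_succ, Nat.factorial_succ]
  rw [tauDenom, tauDenom, hfact, prod_range_succ']
  simp only [mul_zero, add_zero]
  rw [prod_congr rfl fun j _ => show 2 * (k + 1) + 2 * j + 1 = 2 * k + 2 * (j + 1) + 1 by ring]
  ring

lemma tauSeries_eq_powDivSum (i : ℕ) (s : ℝ) :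
    tauSeries i s = (-1) ^ i * powDivSum (tauDenom i) (s ^ 2) := by
  simp only [tauSeries, powDivSum, tauDenom, pow_mul]

lemma hasDerivAt_powDivSum_tauDenom (i : ℕ) (x : ℝ) :
    HasDerivAt (powDivSum (tauDenom i)) (powDivSum (tauDenom (i + 1)) x / 2) x := by
  convert hasDerivAt_powDivSum (factorial_le_tauDenom i) x using 1
  rw [powDivSum, ← tsum_div_const]
  refine tsum_congr fun k => ?_
  rw [tauDenom_succ]
  push_cast
  field_simp

lemma hasDerivAt_tauSeries (i : ℕ) (s : ℝ) :
    HasDerivAt (tauSeries i) (-s * tauSeries (i + 1) s) s := by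
  have h := ((hasDerivAt_powDivSum_tauDenom i (s ^ 2)).comp s (hasDerivAt_pow 2 s)).const_mul
    ((-1 : ℝ) ^ i)
  rw [funext (tauSeries_eq_powDivSum i)]
  refine h.congr_deriv ?_
  rw [tauSeries_eq_powDivSum]
  push_cast
  ring

lemma tau_eq_tauSeries (i : ℕ) {s : ℝ} (hs : s ≠ 0) : tau i s = tauSeries i s := by
  induction i generalizing s with
  | zero =>
    simp [tau, tauSeries, Real.cosh_eq_tsum]
  | succ i ih =>
    have hderiv : deriv (tau i) s = deriv (tauSeries i) s :=
      Filter.EventuallyEq.deriv_eq ((eventually_ne_nhds hs).mono fun x hx => ih hx)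
    change -(1 / s) * deriv (tau i) s = _
    rw [hderiv, (hasDerivAt_tauSeries i s).deriv]
    field_simp

lemma analyticAt_tauSeries (i : ℕ) (s : ℝ) : AnalyticAt ℝ (tauSeries i) s := by
  rw [funext (tauSeries_eq_powDivSum i)]
  have hg := analyticAt_powDivSum (factorial_le_tauDenom i) (s ^ 2)
  exact analyticAt_const.mul (hg.comp (f := fun x : ℝ => x ^ 2) (by fun_prop))

lemma tauSeries_neg (i : ℕ) (s : ℝ) : tauSeries i (-s) = tauSeries i s := by
  simp only [tauSeries_eq_powDivSum, neg_sq]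

lemma tauSeries_zero (i : ℕ) :
    tauSeries i 0 = (-1) ^ i / ((∏ j ∈ range i, (2 * j + 1) : ℕ) : ℝ) := by
  rw [tauSeries_eq_powDivSum, powDivSum, tsum_eq_single 0 fun k hk => by simp [hk]]
  simp [tauDenom, div_eq_mul_inv]

theorem tau_series_extension (i : ℕ) :
    (∀ s : ℝ, Summable (fun k : ℕ => s ^ (2 * k) /
      (((2 * k).factorial * ∏ j ∈ Finset.range i, (2 * k + 2 * j + 1) : ℕ) : ℝ))) ∧
    (∀ s : ℝ, s ≠ 0 → tau i s = tauSeries i s) ∧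
    AnalyticOn ℝ (tauSeries i) Set.univ ∧
    (∀ s : ℝ, tauSeries i (-s) = tauSeries i s) ∧
    tauSeries i 0 = (-1 : ℝ) ^ i / ((∏ j ∈ Finset.range i, (2 * j + 1) : ℕ) : ℝ) := by
  refine ⟨fun s => ?_, fun s hs => tau_eq_tauSeries i hs,
    fun s _ => (analyticAt_tauSeries i s).analyticWithinAt, tauSeries_neg i, tauSeries_zero i⟩
  have h := summable_pow_div_of_factorial_le (factorial_le_tauDenom i) (s ^ 2)
  simp only [← pow_mul] at h
  exact h
end

section
/- For all i ≥ 0 and s ≠ 0, the function τ_i satisfies the second-order differential equation τ_i''(s) + (2i/s)·τ_i'(s) − τ_i(s) = 0. -/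
/-!
If `f` solves `f'' + (2ν/s) f' - f = 0`, then `g = -f'/s` solves the same equation with `ν + 1`:
differentiating the equation for `f` once expresses `f'''` through `f, f', f''`, and substituting
into `g'' + (2(ν+1)/s) g' - g` makes every coefficient cancel. Starting from `cosh'' = cosh`,
induction on `i` gives the equation for `τ_i` with `ν = i`.
-/

open Topology
open scoped ContDiff

def SolvesTauODE (ν : ℝ) (f : ℝ → ℝ) : Prop :=
  ∀ s ≠ 0, deriv (deriv f) s + (2 * ν / s) * deriv f s - f s = 0

theorem contDiffOn_tau (i : ℕ) : ContDiffOn ℝ ∞ (tau i) {0}ᶜ := by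
  induction i with
  | zero => exact Real.contDiff_cosh.contDiffOn
  | succ i ih =>
    have hinv : ContDiffOn ℝ ∞ (fun s : ℝ => -(1 / s)) {0}ᶜ := by
      simpa only [one_div] using (contDiffOn_inv ℝ (𝕜' := ℝ)).neg
    exact hinv.mul (ih.deriv_of_isOpen isOpen_compl_singleton le_rfl)

theorem hasDerivAt_neg_one_div_mul_deriv {f : ℝ → ℝ} {t : ℝ} (ht : t ≠ 0)
    (hf : DifferentiableAt ℝ (deriv f) t) :
    HasDerivAt (fun u => -(1 / u) * deriv f u)
      (deriv f t / t ^ 2 - deriv (deriv f) t / t) t := by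
  simp only [one_div]
  refine ((hasDerivAt_inv ht).fun_neg.fun_mul hf.hasDerivAt).congr_deriv ?_
  field_simp
  ring

theorem SolvesTauODE.neg_one_div_mul_deriv {f : ℝ → ℝ} {ν : ℝ} (hf : ContDiffOn ℝ ∞ f {0}ᶜ)
    (hode : SolvesTauODE ν f) : SolvesTauODE (ν + 1) fun t => -(1 / t) * deriv f t := by
  intro s hs
  have hdiff {h : ℝ → ℝ} (hh : ContDiffOn ℝ ∞ h {0}ᶜ) {t : ℝ} (ht : t ≠ 0) :
      DifferentiableAt ℝ h t :=
    (hh.contDiffAt (isOpen_compl_singleton.mem_nhds ht)).differentiableAt (by simp)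
  have hf' : ContDiffOn ℝ ∞ (deriv f) {0}ᶜ := hf.deriv_of_isOpen isOpen_compl_singleton le_rfl
  have hnhds : ∀ᶠ t in 𝓝 s, t ≠ 0 := isOpen_compl_singleton.mem_nhds hs
  have hf''_eq : deriv (deriv f) =ᶠ[𝓝 s] fun t => f t - 2 * ν * t⁻¹ * deriv f t := by
    filter_upwards [hnhds] with t ht
    rw [← div_eq_mul_inv]
    linear_combination hode t ht
  have hf''' : HasDerivAt (deriv (deriv f))
      (deriv f s + 2 * ν / s ^ 2 * deriv f s - 2 * ν / s * deriv (deriv f) s) s := by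
    refine ((hdiff hf hs).hasDerivAt.fun_sub
      (((hasDerivAt_inv hs).const_mul (2 * ν)).fun_mul (hdiff hf' hs).hasDerivAt)
      ).congr_of_eventuallyEq hf''_eq |>.congr_deriv ?_
    ring
  have hg'_eq : deriv (fun t => -(1 / t) * deriv f t) =ᶠ[𝓝 s]
      fun t => deriv f t / t ^ 2 - deriv (deriv f) t / t := by
    filter_upwards [hnhds] with t ht
    exact (hasDerivAt_neg_one_div_mul_deriv ht (hdiff hf' ht)).deriv
  have hg'' := (((hdiff hf' hs).hasDerivAt.fun_div (hasDerivAt_pow 2 s) (pow_ne_zero 2 hs)).fun_sub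
    (hf'''.fun_div (hasDerivAt_id' s) hs)).congr_of_eventuallyEq hg'_eq
  rw [hg''.deriv, (hasDerivAt_neg_one_div_mul_deriv hs (hdiff hf' hs)).deriv]
  field_simp
  ring

theorem solvesTauODE_tau (i : ℕ) : SolvesTauODE i (tau i) := by
  induction i with
  | zero =>
    intro s _
    change deriv (deriv Real.cosh) s + _ - Real.cosh s = 0
    simp [Real.deriv_cosh]
  | succ i ih =>
    push_cast
    exact ih.neg_one_div_mul_deriv (contDiffOn_tau i)

theorem tau_ode (i : ℕ) (s : ℝ) (hs : s ≠ 0) :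
    deriv (deriv (tau i)) s + (2 * (i : ℝ) / s) * deriv (tau i) s - tau i s = 0 :=
  solvesTauODE_tau i s hs
end

section
/- For all i ≥ 0 and R > 0, the improper integral ∫_R^∞ χ_i(r)·e^{-r} dr equals e^{-R}·χ_{i+1}(R)/R, where χ_i is the i-th reverse Bessel polynomial. -/
/-!
Write `χ_{i+1} = X q_i`. The recursion for `χ` gives one for `q_i`, and with it
`q_i - q_i' = χ_i`. Hence `-q_i(r) e^{-r}` is an antiderivative of `χ_i(r) e^{-r}` that tends
to `0` at infinity, so the integral over `(R, ∞)` equals `q_i(R) e^{-R} = e^{-R} χ_{i+1}(R) / R`.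
-/

/-- The reverse Bessel polynomials. -/
noncomputable def chi : ℕ → Polynomial ℤ
  | 0 => 1
  | 1 => Polynomial.X
  | (i+2) => Polynomial.X ^ 2 * chi i + Polynomial.C (2 * (i : ℤ) + 1) * chi (i+1)

open Polynomial Real Set Filter Asymptotics MeasureTheory Topology

namespace Polynomial

theorem isBigO_eval_mul_exp_neg (p : ℝ[X]) :
    (fun x => p.eval x * exp (-x)) =O[atTop] fun x => exp (-(1 / 2) * x) := by
  have hpow : p.eval =O[atTop] fun x => x ^ p.natDegree := by
    simpa using isBigO_atTop_of_degree_le p (X ^ p.natDegree) (by simp [degree_le_natDegree])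
  have hexp : p.eval =O[atTop] fun x => exp ((1 / 2) * x) :=
    hpow.trans (isLittleO_pow_exp_pos_mul_atTop _ one_half_pos).isBigO
  refine (hexp.mul (isBigO_refl (fun x => exp (-x)) atTop)).congr_right fun x => ?_
  rw [← exp_add]
  ring_nf

theorem integrableOn_eval_mul_exp_neg (p : ℝ[X]) (a : ℝ) :
    IntegrableOn (fun x => p.eval x * exp (-x)) (Ioi a) :=
  integrable_of_isBigO_exp_neg one_half_pos (by fun_prop) p.isBigO_eval_mul_exp_neg

theorem tendsto_eval_mul_exp_neg_atTop (p : ℝ[X]) :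
    Tendsto (fun x => p.eval x * exp (-x)) atTop (𝓝 0) := by
  simpa only [exp_neg, div_eq_mul_inv] using p.tendsto_div_exp_atTop

theorem integral_Ioi_eval_sub_derivative_mul_exp_neg (p : ℝ[X]) (a : ℝ) :
    ∫ x in Ioi a, (p - derivative p).eval x * exp (-x) = p.eval a * exp (-a) := by
  have hderiv : ∀ x ∈ Ici a, HasDerivAt (fun x => -(p.eval x * exp (-x)))
      ((p - derivative p).eval x * exp (-x)) x := by
    intro x _
    refine ((p.hasDerivAt x).fun_mul (hasDerivAt_neg x).exp).fun_neg.congr_deriv ?_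
    simp only [eval_sub]
    ring
  have hlim := p.tendsto_eval_mul_exp_neg_atTop.neg
  rw [neg_zero] at hlim
  rw [integral_Ioi_of_hasDerivAt_of_tendsto' hderiv
    ((p - derivative p).integrableOn_eval_mul_exp_neg a) hlim]
  ring

end Polynomial

theorem chi_add_two (i : ℕ) :
    chi (i + 2) = X ^ 2 * chi i + (2 * i + 1 : ℤ[X]) * chi (i + 1) := by
  rw [chi]
  simp

noncomputable def chiDivX : ℕ → ℤ[X]
  | 0 => 1
  | 1 => X + 1
  | (i+2) => X ^ 2 * chiDivX i + (2 * i + 3 : ℤ[X]) * chiDivX (i + 1)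

theorem X_mul_chiDivX (i : ℕ) : X * chiDivX i = chi (i + 1) := by
  induction i using Nat.twoStepInduction with
  | zero => simp [chiDivX, chi]
  | one => simp [chiDivX, chi]; ring
  | more i h₀ h₁ =>
    rw [chiDivX, chi_add_two (i + 1), ← h₀, ← h₁]
    push_cast
    ring

theorem chiDivX_sub_derivative (i : ℕ) : chiDivX i - derivative (chiDivX i) = chi i := by
  induction i using Nat.twoStepInduction with
  | zero => simp [chiDivX, chi]
  | one => simp [chiDivX, chi]
  | more i h₀ h₁ =>
    rw [chiDivX, chi_add_two]
    simp only [derivative_add, derivative_mul, derivative_X_pow, derivative_natCast,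
      derivative_ofNat, Nat.cast_ofNat, map_ofNat]
    linear_combination X ^ 2 * h₀ + (2 * i + 3 : ℤ[X]) * h₁ - 2 * X_mul_chiDivX i

theorem integral_chi_exp (i : ℕ) (R : ℝ) (hR : 0 < R) :
    ∫ r in Set.Ioi R, (Polynomial.aeval r (chi i) : ℝ) * Real.exp (-r) =
      Real.exp (-R) * (Polynomial.aeval R (chi (i+1)) : ℝ) / R := by
  set q : ℝ[X] := (chiDivX i).map (algebraMap ℤ ℝ)
  have hchi : ∀ r : ℝ, aeval r (chi i) = (q - derivative q).eval r := fun r => by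
    rw [← chiDivX_sub_derivative, ← eval_map_algebraMap, Polynomial.map_sub, derivative_map]
  have hchi_succ : aeval R (chi (i + 1)) = R * q.eval R := by
    rw [← X_mul_chiDivX, map_mul, aeval_X, eval_map_algebraMap]
  simp_rw [hchi]
  rw [integral_Ioi_eval_sub_derivative_mul_exp_neg, hchi_succ]
  field_simp
end

section
/- The generating function of the reverse Bessel polynomials has the Thron-type continued fraction expansion Σ_{i≥0} t^i χ_i(R) = 1/(1 − Rt/(1 − t/(1 − Rt − 2t/(1 − Rt − 3t/(1 − Rt − 4t/(1 − ···)))))), as an identity of formal power series in t over ℤ[R]: the depth-N truncation of the continued fraction agrees with the generating function modulo t^{N}. -/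
/-- Numerator coefficients of the Thron-type continued fraction: α = (R, 1, 2, 3, 4, …). -/
noncomputable def cfAlpha : ℕ → RatFunc ℚ :=
  fun k => if k = 1 then RatFunc.X else ((k - 1 : ℕ) : RatFunc ℚ)

/-- Linear coefficients of the continued fraction: δ = (0, 0, R, R, R, …). -/
noncomputable def cfDelta : ℕ → RatFunc ℚ :=
  fun k => if k ≤ 2 then 0 else RatFunc.X

/-- The depth-`d` truncation of the continued fraction, starting at level `k`
(levels are 1-indexed): `cfTrunc 0 k = 1` and
`cfTrunc (d+1) k = (1 - δ_k t - α_k t · cfTrunc d (k+1))⁻¹`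
as a formal power series in `t` over the field ℚ(R). -/
noncomputable def cfTrunc : ℕ → ℕ → PowerSeries (RatFunc ℚ)
  | 0, _ => 1
  | (d+1), k =>
      (1 - PowerSeries.C (cfDelta k) * PowerSeries.X
         - PowerSeries.C (cfAlpha k) * PowerSeries.X * cfTrunc d (k+1))⁻¹

/-!
Let `T_k` be the tail of the continued fraction from level `k` on, i.e. the `t`-adic limit of the
truncations; it satisfies `T_k = 1/(1 - δ_k t - α_k t T_{k+1})`. Each tail satisfies a Riccati
equation `P_k := 2t²T_k' - q₀ - q₁T_k - q₂T_k² = 0`: the coefficients at level `k` come from those at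
level `k + 1` by substituting `T_{k+1} = (T_k - 1 - δ_k t T_k)/(α_k t T_k)` and clearing denominators,
which turns into the identity `P_k = t · P_{k+1} · α_k T_k²`. So every `P_k` is divisible by all powers
of `t`, hence zero. At level 1 the equation is linear, `2t²T₁' + 1 + (R+1)t = (1 + t - R²t²)T₁`, and
its coefficients are the three-term recurrence of the `χ_i`.
-/

open PowerSeries

namespace PowerSeries

variable {K : Type*} [Field K]

theorem X_pow_succ_dvd_inv_sub_inv (a b : K) {f g : K⟦X⟧} {n : ℕ} (h : X ^ n ∣ f - g) :
    X ^ (n + 1) ∣ (1 - C b * X - C a * X * f)⁻¹ - (1 - C b * X - C a * X * g)⁻¹ := by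
  have hf := PowerSeries.mul_inv_cancel (1 - C b * X - C a * X * f) (by simp)
  have hg := PowerSeries.mul_inv_cancel (1 - C b * X - C a * X * g) (by simp)
  have key : (1 - C b * X - C a * X * f)⁻¹ - (1 - C b * X - C a * X * g)⁻¹ =
      (1 - C b * X - C a * X * f)⁻¹ * (1 - C b * X - C a * X * g)⁻¹ * C a * (X * (f - g)) := by
    linear_combination (1 - C b * X - C a * X * g)⁻¹ * hf - (1 - C b * X - C a * X * f)⁻¹ * hg
  rw [key, pow_succ']
  exact dvd_mul_of_dvd_right (mul_dvd_mul_left X h) _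

theorem eq_zero_of_forall_X_mul_succ_dvd {R : Type*} [CommSemiring R] {P : ℕ → R⟦X⟧}
    (h : ∀ k, X * P (k + 1) ∣ P k) (k : ℕ) : P k = 0 := by
  have hdvd : ∀ n k, X ^ n ∣ P k := by
    intro n
    induction n with
    | zero => simp
    | succ n ih =>
      intro k
      rw [pow_succ']
      exact (mul_dvd_mul_left X (ih (k + 1))).trans (h k)
  ext n
  simpa using X_pow_dvd_iff.1 (hdvd (n + 1) k) n (lt_add_one n)

variable (α δ : ℕ → K)

noncomputable def thronTrunc : ℕ → ℕ → K⟦X⟧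
  | 0, _ => 1
  | d + 1, k => (1 - C (δ k) * X - C (α k) * X * thronTrunc d (k + 1))⁻¹

theorem X_pow_dvd_thronTrunc_sub_thronTrunc {d d' : ℕ} (h : d ≤ d') (k : ℕ) :
    X ^ d ∣ thronTrunc α δ d' k - thronTrunc α δ d k := by
  induction d generalizing d' k with
  | zero => simp
  | succ d ih =>
    obtain ⟨e, rfl⟩ : ∃ e, d' = e + 1 := ⟨d' - 1, by omega⟩
    exact X_pow_succ_dvd_inv_sub_inv _ _ (ih (by omega) (k + 1))

noncomputable def thronTail (k : ℕ) : K⟦X⟧ := mk fun n => coeff n (thronTrunc α δ (n + 1) k)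

theorem coeff_thronTrunc_of_lt {n d : ℕ} (h : n < d) (k : ℕ) :
    coeff n (thronTrunc α δ d k) = coeff n (thronTail α δ k) := by
  rw [thronTail, coeff_mk, ← sub_eq_zero, ← map_sub]
  exact X_pow_dvd_iff.1 (X_pow_dvd_thronTrunc_sub_thronTrunc α δ h k) n (lt_add_one n)

theorem X_pow_dvd_thronTail_sub_thronTrunc (d k : ℕ) :
    X ^ d ∣ thronTail α δ k - thronTrunc α δ d k :=
  X_pow_dvd_iff.2 fun n hn => by rw [map_sub, coeff_thronTrunc_of_lt α δ hn, sub_self]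

theorem thronTail_eq_inv (k : ℕ) :
    thronTail α δ k = (1 - C (δ k) * X - C (α k) * X * thronTail α δ (k + 1))⁻¹ := by
  ext n
  rw [← sub_eq_zero, ← map_sub]
  refine X_pow_dvd_iff.1 ?_ n (lt_add_one n)
  have hstep := X_pow_succ_dvd_inv_sub_inv (α k) (δ k)
    (X_pow_dvd_thronTail_sub_thronTrunc α δ n (k + 1))
  have htrunc : thronTrunc α δ (n + 1) k =
      (1 - C (δ k) * X - C (α k) * X * thronTrunc α δ n (k + 1))⁻¹ := rfl
  rw [← htrunc] at hstep
  simpa using dvd_sub (X_pow_dvd_thronTail_sub_thronTrunc α δ (n + 1) k) hstep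

theorem thronTail_mul (k : ℕ) :
    (1 - C (δ k) * X - C (α k) * X * thronTail α δ (k + 1)) * thronTail α δ k = 1 := by
  nth_rw 2 [thronTail_eq_inv]
  exact PowerSeries.mul_inv_cancel _ (by simp)

theorem constantCoeff_thronTail (k : ℕ) : constantCoeff (thronTail α δ k) = 1 := by
  rw [thronTail_eq_inv]; simp

theorem thronTail_mul_derivative (k : ℕ) :
    (1 - C (δ k) * X - C (α k) * X * thronTail α δ (k + 1)) * d⁄dX K (thronTail α δ k) =
      (C (δ k) + C (α k) * (thronTail α δ (k + 1) + X * d⁄dX K (thronTail α δ (k + 1)))) *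
        thronTail α δ k := by
  have h := congrArg (d⁄dX K) (thronTail_mul α δ k)
  simp only [Derivation.leibniz, map_sub, Derivation.map_one_eq_zero, derivative_C,
    derivative_X, smul_eq_mul] at h
  linear_combination h

end PowerSeries

theorem cfTrunc_eq_thronTrunc : cfTrunc = thronTrunc cfAlpha cfDelta := by
  funext d k
  induction d generalizing k with
  | zero => rfl
  | succ d ih => rw [cfTrunc, thronTrunc, ih]

theorem cfAlpha_one : cfAlpha 1 = RatFunc.X := rfl

theorem cfAlpha_two : cfAlpha 2 = 1 := by simp [cfAlpha]

theorem cfAlpha_add_three (m : ℕ) : cfAlpha (m + 3) = m + 2 := by simp [cfAlpha]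

theorem cfDelta_one : cfDelta 1 = 0 := rfl

theorem cfDelta_two : cfDelta 2 = 0 := rfl

theorem cfDelta_add_three (m : ℕ) : cfDelta (m + 3) = RatFunc.X := by simp [cfDelta]

section ReverseBessel

local notation "𝒯" => thronTail cfAlpha cfDelta
local notation "R" => (C (RatFunc.X : RatFunc ℚ) : (RatFunc ℚ)⟦X⟧)

noncomputable def riccatiDefect : ℕ → (RatFunc ℚ)⟦X⟧
  | 1 => 2 * X ^ 2 * d⁄dX _ (𝒯 1) + 1 + (R + 1) * X - (1 + X - R ^ 2 * X ^ 2) * 𝒯 1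
  | 2 => 2 * X ^ 2 * d⁄dX _ (𝒯 2) + 1 + R * X - (1 + (2 * R - 1) * X + R ^ 2 * X ^ 2) * 𝒯 2
      + R * X * (1 + (R + 1) * X) * 𝒯 2 ^ 2
  | k => 2 * X ^ 2 * d⁄dX _ (𝒯 k) + 1 + R * X - (1 - X - R ^ 2 * X ^ 2) * 𝒯 k
      + ((k : (RatFunc ℚ)⟦X⟧) - 2) * X * (1 + R * X) * 𝒯 k ^ 2

theorem riccatiDefect_eq_X_mul {k : ℕ} (hk : 1 ≤ k) :
    riccatiDefect k = X * riccatiDefect (k + 1) * (C (cfAlpha k) * 𝒯 k ^ 2) := by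
  have hT := thronTail_mul cfAlpha cfDelta k
  have hD := thronTail_mul_derivative cfAlpha cfDelta k
  match k with
  | 1 =>
    simp only [cfAlpha_one, cfDelta_one, riccatiDefect, map_zero] at hT hD ⊢
    linear_combination (2 * X ^ 2 * 𝒯 1) * hD
      - (2 * X ^ 2 * d⁄dX _ (𝒯 1) + 2 * X * 𝒯 1 + (1 + (2 * R - 1) * X + R ^ 2 * X ^ 2) * 𝒯 1
        - (1 + (R + 1) * X) * (𝒯 1 - 1 + R * X * 𝒯 1 * 𝒯 2)) * hT
  | 2 =>
    simp only [cfAlpha_two, cfDelta_two, riccatiDefect, map_zero, map_one] at hT hD ⊢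
    linear_combination (2 * X ^ 2 * 𝒯 2) * hD
      - (2 * X ^ 2 * d⁄dX _ (𝒯 2) + 2 * X * 𝒯 2 + (1 - X - R ^ 2 * X ^ 2) * 𝒯 2
        - (1 + R * X) * (𝒯 2 - 1 + X * 𝒯 2 * 𝒯 3)) * hT
  | m + 3 =>
    rw [riccatiDefect, riccatiDefect]
    · simp only [cfAlpha_add_three, cfDelta_add_three, map_add, map_natCast, map_ofNat,
        Nat.cast_add, Nat.cast_ofNat] at hT hD ⊢
      linear_combination (2 * X ^ 2 * 𝒯 (m + 3)) * hD
        - (2 * X ^ 2 * d⁄dX _ (𝒯 (m + 3)) + 2 * X * 𝒯 (m + 3) + (1 - X - R ^ 2 * X ^ 2) * 𝒯 (m + 3)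
          - (1 + R * X) * (𝒯 (m + 3) - 1 - R * X * 𝒯 (m + 3)
            + ((m : (RatFunc ℚ)⟦X⟧) + 2) * X * 𝒯 (m + 3) * 𝒯 (m + 4))) * hT
    all_goals omega

theorem riccatiDefect_one_eq_zero : riccatiDefect 1 = 0 :=
  eq_zero_of_forall_X_mul_succ_dvd (P := fun k => riccatiDefect (k + 1))
    (fun k => ⟨_, riccatiDefect_eq_X_mul (Nat.le_add_left 1 k)⟩) 0

theorem thronTail_one_linear_ode :
    C 2 * (X ^ 2 * d⁄dX _ (𝒯 1)) + C (RatFunc.X ^ 2) * (X ^ 2 * 𝒯 1) + 1 + C (RatFunc.X + 1) * X =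
      𝒯 1 + X * 𝒯 1 := by
  have h := riccatiDefect_one_eq_zero
  rw [riccatiDefect] at h
  simp only [map_ofNat, map_pow, map_add, map_one]
  linear_combination h

theorem coeff_add_two_thronTail_one (n : ℕ) :
    coeff (n + 2) (𝒯 1) =
      (2 * (n : RatFunc ℚ) + 1) * coeff (n + 1) (𝒯 1) + RatFunc.X ^ 2 * coeff n (𝒯 1) := by
  have h := congrArg (coeff (n + 2)) thronTail_one_linear_ode
  simp only [map_add, coeff_C_mul, coeff_X_pow_mul, coeff_derivative, coeff_one, coeff_succ_X_mul,
    coeff_succ_mul_X, coeff_succ_C, map_one, Nat.add_eq_zero_iff, OfNat.ofNat_ne_zero, and_false,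
    one_ne_zero, ↓reduceIte, add_zero] at h
  linear_combination -h

theorem coeff_one_thronTail_one : coeff 1 (𝒯 1) = RatFunc.X := by
  have h := congrArg (coeff 1) thronTail_one_linear_ode
  simp only [map_add, coeff_C_mul, coeff_X_pow_mul', coeff_one, coeff_succ_X_mul, coeff_succ_mul_X,
    coeff_zero_eq_constantCoeff, constantCoeff_C, map_one, Nat.not_ofNat_le_one,
    one_ne_zero, ↓reduceIte, mul_zero, add_zero, zero_add] at h
  linear_combination -h - constantCoeff_thronTail cfAlpha cfDelta 1

theorem coeff_thronTail_one (n : ℕ) :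
    coeff n (𝒯 1) = Polynomial.aeval RatFunc.X (chi n) := by
  induction n using chi.induct with
  | case1 => simp [chi, constantCoeff_thronTail]
  | case2 => simp [chi, coeff_one_thronTail_one]
  | case3 i ih ih' =>
    rw [coeff_add_two_thronTail_one, ih, ih', chi, map_add, map_mul, map_mul, map_pow,
      Polynomial.aeval_X, Polynomial.aeval_C, eq_intCast]
    push_cast
    ring

end ReverseBessel

/-- The generating function of the reverse Bessel polynomials has the Thron-type
continued fraction expansion with α = (R,1,2,3,4,…) and δ = (0,0,R,R,R,…):
the depth-N truncation agrees with Σ tⁱ χᵢ(R) modulo t^N. -/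
theorem chi_genFun_thron_cf (N i : ℕ) (hi : i < N) :
    PowerSeries.coeff i (cfTrunc N 1) =
      Polynomial.aeval (RatFunc.X : RatFunc ℚ) (chi i) := by
  rw [cfTrunc_eq_thronTrunc, coeff_thronTrunc_of_lt _ _ hi, coeff_thronTail_one]
end
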